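/- Suppose that f is a polynomial with f(0) = 1. Then |f(z)| ≤ exp(s̃_1(f)·|z|) for all z ∈ ℂ; and for every integer p ≥ 2 there exists a positive constant c_p (independent of f) such that |f(z)| ≤ exp(−Re Σ_{k=1}^{p−1} (1/k)·s_k(f)·z^k + c_p·s̃_p(f)·|z|^p) for all z ∈ ℂ. -/

import Mathlib

/-!
Since `f(0) = 1`, `f(z) = ∏ₐ (1 - z / a)` over the roots `a`, so it suffices to bound a single
factor `‖1 - w‖` by `exp` of a quantity that is additive over the roots once `w = z / a`.
The first bound is `‖1 - w‖ ≤ 1 + ‖w‖ ≤ exp ‖w‖`. For the second, write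
`log ‖1 - w‖ = -Re (∑_{k<p} w^k / k) + Re (remainder)`: when `‖w‖ ≤ 1/2` the Taylor remainder
of `log (1 - w)` is `O(‖w‖^p)`, and when `‖w‖ ≥ 1/2` every `‖w‖^k` with `k ≤ p` is at most
`2^p ‖w‖^p`, so the crude bound `exp ‖w‖` already suffices. This gives `c_p = (p + 1) 2^p`.
-/

noncomputable section
open Filter Polynomial Topology

/-- `f_n → a` weakly: for every `k`, `f_n^{(k)}(0) → k! * a_k`. -/
def WeakConv (f : ℕ → Polynomial ℂ) (a : ℕ → ℂ) : Prop :=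
  ∀ k : ℕ, Tendsto (fun n => (Polynomial.derivative^[k] (f n)).eval 0) atTop
    (𝓝 ((Nat.factorial k : ℂ) * a k))

def WeakConvR (f : ℕ → Polynomial ℝ) (a : ℕ → ℝ) : Prop :=
  ∀ k : ℕ, Tendsto (fun n => (Polynomial.derivative^[k] (f n)).eval 0) atTop
    (𝓝 ((Nat.factorial k : ℝ) * a k))

/-- The nonnegative real axis `[0,∞)` as a subset of `ℂ`. -/
def S0 : Set ℂ := {z : ℂ | z.im = 0 ∧ 0 ≤ z.re}

/-- The Pólya–Obrechkoff class. -/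
def PolyaObrechkoff (F : ℂ → ℂ) : Prop :=
  ∃ (ι : Type) (_ : Countable ι) (c : ℂ) (m : ℕ) (α : ℝ) (β : ℂ) (a : ι → ℂ),
    0 ≤ α ∧
    (∀ j, a j ≠ 0 ∧ 0 ≤ (a j).im) ∧
    Summable (fun j => ((‖a j‖)⁻¹) ^ 2) ∧
    Summable (fun j => (-(a j)⁻¹).im) ∧
    (∑' j, (-(a j)⁻¹).im) ≤ β.im ∧
    ∀ z : ℂ, F z = c * z ^ m * Complex.exp (-(α : ℂ) * z ^ 2 + β * z) *
      ∏' j, ((1 - z / a j) * Complex.exp (z / a j))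

/-- The Laguerre–Pólya class. -/
def LaguerrePolya (F : ℂ → ℂ) : Prop :=
  ∃ (ι : Type) (_ : Countable ι) (c : ℝ) (m : ℕ) (α : ℝ) (β : ℝ) (a : ι → ℝ),
    0 ≤ α ∧
    (∀ j, a j ≠ 0) ∧
    Summable (fun j => ((a j)⁻¹) ^ 2) ∧
    ∀ z : ℂ, F z = (c : ℂ) * z ^ m * Complex.exp (-(α : ℂ) * z ^ 2 + (β : ℂ) * z) *
      ∏' j, ((1 - z / (a j : ℂ)) * Complex.exp (z / (a j : ℂ)))

/-- The class `LP*`: products of a real polynomial with a Laguerre–Pólya function. -/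
def LPStar (F : ℂ → ℂ) : Prop :=
  ∃ (P : Polynomial ℝ) (g : ℂ → ℂ), LaguerrePolya g ∧
    ∀ z : ℂ, F z = (P.map (algebraMap ℝ ℂ)).eval z * g z

/-- The class `LP(S₀)`. -/
def LPS0 (F : ℂ → ℂ) : Prop :=
  ∃ (ι : Type) (_ : Countable ι) (c : ℝ) (m : ℕ) (α : ℝ) (a : ι → ℝ),
    0 ≤ α ∧
    (∀ j, 0 < a j) ∧
    Summable (fun j => (a j)⁻¹) ∧
    ∀ z : ℂ, F z = (c : ℂ) * z ^ m * Complex.exp (-(α : ℂ) * z) *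
      ∏' j, (1 - z / (a j : ℂ))

/-- The class `LP(S₀)*`. -/
def LPS0Star (F : ℂ → ℂ) : Prop :=
  ∃ (P : Polynomial ℝ) (g : ℂ → ℂ), LPS0 g ∧
    ∀ z : ℂ, F z = (P.map (algebraMap ℝ ℂ)).eval z * g z

/-- `s_k(f) = Σ_j a_j^{-k}`, sum over the roots of `f` with multiplicity. -/
def sPow (k : ℕ) (f : Polynomial ℂ) : ℂ := (f.roots.map (fun a => (a⁻¹) ^ k)).sum

/-- `s̃_k(f) = Σ_j |a_j|^{-k}`, sum over the roots of `f` with multiplicity. -/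
def sAbs (k : ℕ) (f : Polynomial ℂ) : ℝ :=
  (f.roots.map (fun a => ((‖a‖)⁻¹) ^ k)).sum

open scoped Classical in
/-- `N(f;X)`: number of zeros of the polynomial `f` in `X`, with multiplicity. -/
def NPoly (g : Polynomial ℂ) (X : Set ℂ) : ℕ :=
  Multiset.card (g.roots.filter (fun z => z ∈ X))

/-- `N(f;X)` for a real polynomial, zeros counted in `ℂ`. -/
def NPolyR (g : Polynomial ℝ) (X : Set ℂ) : ℕ := NPoly (g.map (algebraMap ℝ ℂ)) X

/-- The `n`-th Jensen polynomial of the series `Σ a_k z^k`. -/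
def jensen (a : ℕ → ℂ) (n : ℕ) : Polynomial ℂ :=
  ∑ k ∈ Finset.range (n + 1),
    Polynomial.C ((n.factorial : ℂ) / ((n - k).factorial : ℂ) * a k) * Polynomial.X ^ k

def jensenR (a : ℕ → ℝ) (n : ℕ) : Polynomial ℝ :=
  ∑ k ∈ Finset.range (n + 1),
    Polynomial.C ((n.factorial : ℝ) / ((n - k).factorial : ℝ) * a k) * Polynomial.X ^ k

/-- The `n`-th Appell polynomial of the series `Σ a_k z^k`. -/
def appellR (a : ℕ → ℝ) (n : ℕ) : Polynomial ℝ :=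
  ∑ k ∈ Finset.range (n + 1),
    Polynomial.C ((n.factorial : ℝ) / ((n - k).factorial : ℝ) * a k) * Polynomial.X ^ (n - k)

/-- Order of vanishing of `F` at `z` (least `m` with `F^{(m)}(z) ≠ 0`; `0` if none). -/
def zeroOrder (F : ℂ → ℂ) (z : ℂ) : ℕ := sInf {m : ℕ | iteratedDeriv m F z ≠ 0}

/-- `N(F;X)` for an entire function: zeros in `X` counted with multiplicity. -/
def NEnt (F : ℂ → ℂ) (X : Set ℂ) : ℕ∞ := ∑' z : X, (zeroOrder F z : ℕ∞)

theorem norm_one_sub_le_exp_norm {R : Type*} [SeminormedRing R] [NormOneClass R] (w : R) :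
    ‖1 - w‖ ≤ Real.exp ‖w‖ :=
  calc ‖1 - w‖ ≤ ‖(1 : R)‖ + ‖w‖ := norm_sub_le _ _
    _ = ‖w‖ + 1 := by rw [norm_one, add_comm]
    _ ≤ Real.exp ‖w‖ := Real.add_one_le_exp _

theorem pow_le_two_pow_mul_pow {r : ℝ} (hr : 1 / 2 ≤ r) {j p : ℕ} (hjp : j ≤ p) :
    r ^ j ≤ 2 ^ p * r ^ p :=
  calc r ^ j ≤ (2 * r) ^ (p - j) * r ^ j :=
        le_mul_of_one_le_left (by positivity) (one_le_pow₀ (by linarith))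
    _ = 2 ^ (p - j) * r ^ p := by rw [mul_pow, mul_assoc, ← pow_add, Nat.sub_add_cancel hjp]
    _ ≤ 2 ^ p * r ^ p := by gcongr <;> norm_num

namespace Complex

theorem logTaylor_neg (n : ℕ) (w : ℂ) :
    logTaylor n (-w) = -∑ k ∈ Finset.Icc 1 (n - 1), 1 / (k : ℂ) * w ^ k := by
  rw [logTaylor, ← Finset.sum_neg_distrib]
  symm
  refine Finset.sum_subset (fun k hk => ?_) (fun k hk hk' => ?_) |>.trans
    (Finset.sum_congr rfl fun k _ => ?_)
  · simp only [Finset.mem_Icc, Finset.mem_range] at hk ⊢; omega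
  · obtain rfl : k = 0 := by simp only [Finset.mem_Icc, Finset.mem_range] at hk hk'; omega
    simp -- the `k = 0` term of `logTaylor` vanishes because `x / 0 = 0`
  · have h : (-1 : ℂ) ^ k * (-1) ^ k = 1 := by rw [← mul_pow]; norm_num
    rw [neg_pow w]
    linear_combination (w ^ k / k) * h

theorem norm_logTaylor_le (n : ℕ) (z : ℂ) :
    ‖logTaylor n z‖ ≤ ∑ j ∈ Finset.range n, ‖z‖ ^ j := by
  refine (norm_sum_le _ _).trans (Finset.sum_le_sum fun j _ => ?_)
  rw [norm_div, norm_mul, norm_pow, norm_pow, norm_neg, norm_one, one_pow, one_mul, norm_natCast]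
  obtain rfl | hj := j.eq_zero_or_pos
  · simp
  · exact div_le_self (by positivity) (by exact_mod_cast hj)

theorem norm_one_sub_le_exp_logTaylor_of_norm_le_half (n : ℕ) {w : ℂ} (hw : ‖w‖ ≤ 1 / 2) :
    ‖1 - w‖ ≤ Real.exp ((logTaylor (n + 1) (-w)).re + 2 * ‖w‖ ^ (n + 1)) := by
  have hw1 : ‖w‖ < 1 := hw.trans_lt (by norm_num)
  have hne : 1 - w ≠ 0 := by
    intro h
    rw [← eq_of_sub_eq_zero h, norm_one] at hw1
    exact hw1.false
  set L := log (1 - w)⁻¹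
  set T := logTaylor (n + 1) (-w)
  have hnorm : ‖1 - w‖ = Real.exp (-L.re) := by
    rw [Real.exp_neg, ← norm_exp, exp_log (inv_ne_zero hne), norm_inv, inv_inv]
  have hremainder : ‖L + T‖ ≤ 2 * ‖w‖ ^ (n + 1) :=
    calc ‖L + T‖ ≤ ‖w‖ ^ (n + 1) * (1 - ‖w‖)⁻¹ / (n + 1) :=
          norm_log_one_sub_inv_add_logTaylor_neg_le n hw1
      _ ≤ ‖w‖ ^ (n + 1) * 2 / 1 := by
          gcongr
          · rw [inv_le_comm₀ (by linarith) two_pos]; linarith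
          · linarith
      _ = 2 * ‖w‖ ^ (n + 1) := by ring
  have hre : -(L + T).re ≤ ‖L + T‖ := (neg_le_abs _).trans (abs_re_le_norm _)
  rw [add_re] at hre
  rw [hnorm, Real.exp_le_exp]
  linarith

theorem norm_one_sub_le_exp_logTaylor_of_half_le_norm {p : ℕ} (hp : 1 ≤ p) {w : ℂ}
    (hw : 1 / 2 ≤ ‖w‖) :
    ‖1 - w‖ ≤ Real.exp ((logTaylor p (-w)).re + (p + 1) * 2 ^ p * ‖w‖ ^ p) := by
  refine (norm_one_sub_le_exp_norm w).trans (Real.exp_le_exp.mpr ?_)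
  have hlinear : ‖w‖ ≤ 2 ^ p * ‖w‖ ^ p := by simpa using pow_le_two_pow_mul_pow hw hp
  have hTaylor : -(logTaylor p (-w)).re ≤ p * (2 ^ p * ‖w‖ ^ p) :=
    calc -(logTaylor p (-w)).re ≤ ‖logTaylor p (-w)‖ := (neg_le_abs _).trans (abs_re_le_norm _)
      _ ≤ ∑ j ∈ Finset.range p, ‖w‖ ^ j := by simpa using norm_logTaylor_le p (-w)
      _ ≤ p * (2 ^ p * ‖w‖ ^ p) := by
          simpa using Finset.sum_le_card_nsmul _ _ _ fun j hj =>
            pow_le_two_pow_mul_pow hw (Finset.mem_range.mp hj).le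
  linarith

theorem norm_one_sub_le_exp_logTaylor {p : ℕ} (hp : 1 ≤ p) (w : ℂ) :
    ‖1 - w‖ ≤ Real.exp ((logTaylor p (-w)).re + (p + 1) * 2 ^ p * ‖w‖ ^ p) := by
  rcases le_or_gt ‖w‖ (1 / 2) with hw | hw
  · obtain ⟨n, rfl⟩ := Nat.exists_eq_add_of_le' hp
    refine (norm_one_sub_le_exp_logTaylor_of_norm_le_half n hw).trans ?_
    have : (1 : ℝ) ≤ 2 ^ (n + 1) := one_le_pow₀ one_le_two
    gcongr
    push_cast
    nlinarith
  · exact norm_one_sub_le_exp_logTaylor_of_half_le_norm hp hw.le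

end Complex

theorem Polynomial.eval_eq_prod_roots_one_sub_div {K : Type*} [Field K] {f : K[X]}
    (hf : f.Splits) (h0 : f.eval 0 = 1) (z : K) :
    f.eval z = (f.roots.map fun a => 1 - z / a).prod := by
  have hroot : ∀ a ∈ f.roots, a ≠ 0 := by
    rintro a ha rfl
    simp [(mem_roots'.mp ha).2.eq_zero] at h0
  have heval (w : K) : f.eval w = f.leadingCoeff * (f.roots.map fun a => w - a).prod := by
    conv_lhs => rw [hf.eq_prod_roots]
    simp [eval_multiset_prod, Multiset.map_map]
  have hfactor : (f.roots.map fun a => z - a) = f.roots.map fun a => (0 - a) * (1 - z / a) :=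
    Multiset.map_congr rfl fun a ha => by field_simp [hroot a ha]; ring
  rw [heval, hfactor, Multiset.prod_map_mul, ← mul_assoc, ← heval, h0, one_mul]

theorem Polynomial.norm_eval_le_exp_sum_roots {f : ℂ[X]} (h0 : f.eval 0 = 1) {B : ℂ → ℝ}
    (hB : ∀ w, ‖1 - w‖ ≤ Real.exp (B w)) (z : ℂ) :
    ‖f.eval z‖ ≤ Real.exp (f.roots.map fun a => B (z / a)).sum := by
  rw [eval_eq_prod_roots_one_sub_div (IsAlgClosed.splits f) h0, Real.exp_multiset_sum,
    Multiset.map_map]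
  refine (map_multiset_prod (normHom : ℂ →*₀ ℝ) _).trans_le ?_
  rw [Multiset.map_map]
  exact Multiset.prod_map_le_prod_map₀ _ _ (fun a _ => norm_nonneg (1 - z / a))
    fun a _ => hB (z / a)

theorem sum_roots_norm_div_pow (f : ℂ[X]) (k : ℕ) (z : ℂ) :
    (f.roots.map fun a => ‖z / a‖ ^ k).sum = sAbs k f * ‖z‖ ^ k := by
  rw [sAbs, ← Multiset.sum_map_mul_right]
  exact congrArg _ <| Multiset.map_congr rfl fun a _ => by
    rw [norm_div, div_pow, inv_pow, div_eq_inv_mul]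

theorem sum_roots_logTaylor_neg_div (f : ℂ[X]) (n : ℕ) (z : ℂ) :
    (f.roots.map fun a => Complex.logTaylor n (-(z / a))).sum =
      -∑ k ∈ Finset.Icc 1 (n - 1), 1 / (k : ℂ) * sPow k f * z ^ k := by
  simp_rw [Complex.logTaylor_neg, Multiset.sum_map_neg, Multiset.sum_map_sum]
  refine congrArg _ <| Finset.sum_congr rfl fun k _ => ?_
  rw [sPow, ← Multiset.sum_map_mul_left, ← Multiset.sum_map_mul_right]
  exact congrArg _ <| Multiset.map_congr rfl fun a _ => by ring

theorem re_sum_roots_logTaylor_neg_div (f : ℂ[X]) (n : ℕ) (z : ℂ) :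
    (f.roots.map fun a => (Complex.logTaylor n (-(z / a))).re).sum =
      -(∑ k ∈ Finset.Icc 1 (n - 1), 1 / (k : ℂ) * sPow k f * z ^ k).re := by
  rw [← Complex.neg_re, ← sum_roots_logTaylor_neg_div]
  exact ((map_multiset_sum Complex.reAddGroupHom _).trans
    (congrArg Multiset.sum (Multiset.map_map _ _ _))).symm

/-- Corollary to Proposition 2.2: bounds for a polynomial with `f(0) = 1` in terms of
the power sums of its inverse roots. -/
theorem statement4 :
    (∀ f : Polynomial ℂ, f.eval 0 = 1 → ∀ z : ℂ,
      ‖f.eval z‖ ≤ Real.exp (sAbs 1 f * ‖z‖)) ∧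
    ∀ p : ℕ, 2 ≤ p → ∃ c : ℝ, 0 < c ∧
      ∀ f : Polynomial ℂ, f.eval 0 = 1 → ∀ z : ℂ,
        ‖f.eval z‖ ≤
          Real.exp (-(∑ k ∈ Finset.Icc 1 (p - 1), (1 / (k : ℂ)) * sPow k f * z ^ k).re +
            c * sAbs p f * ‖z‖ ^ p) := by
  refine ⟨fun f hf z => ?_, fun p hp => ⟨(p + 1) * 2 ^ p, by positivity, fun f hf z => ?_⟩⟩
  · have hsum := sum_roots_norm_div_pow f 1 z
    simp only [pow_one] at hsum
    simpa only [hsum] using f.norm_eval_le_exp_sum_roots hf norm_one_sub_le_exp_norm z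
  · have hbound := f.norm_eval_le_exp_sum_roots hf
      (Complex.norm_one_sub_le_exp_logTaylor (p := p) (by omega)) z
    rwa [Multiset.sum_map_add, Multiset.sum_map_mul_left, sum_roots_norm_div_pow,
      re_sum_roots_logTaylor_neg_div, ← mul_assoc] at hbound
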